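/- arXiv:1403.4557 — 2 statements merged into one kernel-verified Lean document; each statement's English description precedes it below -/
import Mathlib

section
/- Let R be a finite group and let S ⊆ R. Then Cay(R,S) is a DCI-graph if and only if the regular subgroups of Aut(Cay(R,S)) that are isomorphic to R form a single conjugacy class of subgroups of Aut(Cay(R,S)), i.e. any two subgroups of Aut(Cay(R,S)) that are isomorphic to R and act regularly on R are conjugate in Aut(Cay(R,S)). -/
/-!
A regular subgroup `H ≅ R` of `Sym(R)` is conjugate to the left regular representation `L(R)` by
its orbit map `r ↦ ψ(r)(1)`. When `H ≤ Aut(Cay(R,S))`, that orbit map is an isomorphism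
`Cay(R,T) → Cay(R,S)` for some `T`; the DCI property makes it a group automorphism followed by
an element of `Aut(Cay(R,S))`, which then conjugates `L(R)` to `H`.

Conversely, an isomorphism `f : Cay(R,S) → Cay(R,T)` conjugates `L(R)` to a second regular
subgroup of `Aut(Cay(R,S))`. Conjugating the two inside `Aut(Cay(R,S))` yields an isomorphism
`Cay(R,S) → Cay(R,T)` normalising `L(R)`, and a permutation normalising `L(R)` and fixing `1` is a
group automorphism.
-/

def CayAut (R : Type*) [Group R] (S : Set R) : Subgroup (Equiv.Perm R) where
  carrier := {f : Equiv.Perm R | ∀ x y : R, x⁻¹ * y ∈ S ↔ (f x)⁻¹ * f y ∈ S}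
  one_mem' := fun x y => by simp
  mul_mem' := by
    intro a b ha hb x y
    simp only [Equiv.Perm.mul_apply]
    rw [hb x y, ha (b x) (b y)]
  inv_mem' := by
    intro a ha x y
    have h := ha (a⁻¹ x) (a⁻¹ y)
    simp only [← Equiv.Perm.mul_apply, mul_inv_cancel, Equiv.Perm.one_apply] at h
    exact h.symm

open Equiv MulAction ConjAct Pointwise

section Cayley

variable {R : Type*} [Group R] {S T U : Set R}

def IsCayleyIso (S T : Set R) (f : R → R) : Prop :=
  ∀ x y : R, x⁻¹ * y ∈ S ↔ (f x)⁻¹ * f y ∈ T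

def IsDCI (S : Set R) : Prop :=
  ∀ T : Set R, (∃ f : Perm R, IsCayleyIso S T f) → ∃ φ : R ≃* R, ⇑φ '' S = T

theorem mem_cayAut_iff {f : Perm R} : f ∈ CayAut R S ↔ IsCayleyIso S S f := Iff.rfl

namespace IsCayleyIso

theorem comp {f g : R → R} (hf : IsCayleyIso S T f) (hg : IsCayleyIso T U g) :
    IsCayleyIso S U (g ∘ f) :=
  fun x y => (hf x y).trans (hg (f x) (f y))

theorem symm {f : R ≃ R} (hf : IsCayleyIso S T f) : IsCayleyIso T S f.symm := fun x y => by
  simpa using (hf (f.symm x) (f.symm y)).symm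

theorem image_eq {f : R ≃ R} (hf : IsCayleyIso S T f) (hf1 : f 1 = 1) : f '' S = T := by
  have hS : S = f ⁻¹' T := Set.ext fun u => by simpa [hf1] using hf 1 u
  rw [hS, f.image_preimage]

end IsCayleyIso

theorem isCayleyIso_mul_left (r : R) : IsCayleyIso S S (r * ·) := fun x y => by
  simp [mul_assoc]

theorem MulEquiv.isCayleyIso_image (φ : R ≃* R) : IsCayleyIso S (φ '' S) φ := fun x y => by
  rw [← map_inv, ← map_mul, φ.injective.mem_set_image]

end Cayley

section Regular

variable {X : Type*}

def Subgroup.IsRegular (H : Subgroup (Perm X)) : Prop :=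
  (∀ x y : X, ∃ h ∈ H, h x = y) ∧ ∀ h ∈ H, ∀ x : X, h x = x → h = 1

theorem Subgroup.IsRegular.smul {H : Subgroup (Perm X)} (hH : H.IsRegular) (c : Perm X) :
    (toConjAct c • H).IsRegular := by
  refine ⟨fun x y => ?_, fun g hg x hx => ?_⟩
  · obtain ⟨h, hH', hxy⟩ := hH.1 (c⁻¹ x) (c⁻¹ y)
    refine ⟨_, Subgroup.smul_mem_pointwise_smul _ (toConjAct c) _ hH', ?_⟩
    simp only [toConjAct_smul, Perm.mul_apply, hxy]
    simp
  · rw [Subgroup.mem_pointwise_smul_iff_inv_smul_mem, ← map_inv, toConjAct_smul] at hg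
    have h1 := hH.2 _ hg (c⁻¹ x) (by simp [hx])
    calc g = c * (c⁻¹ * g * c⁻¹⁻¹) * c⁻¹ := by group
      _ = 1 := by rw [h1]; group

end Regular

section LeftRegular

variable {R : Type*} [Group R] {S T : Set R}

abbrev leftRegular (R : Type*) [Group R] : Subgroup (Perm R) := (toPermHom R R).range

theorem leftRegular_isRegular : (leftRegular R).IsRegular := by
  refine ⟨fun x y => ⟨toPermHom R R (y * x⁻¹), ⟨_, rfl⟩, by simp⟩, ?_⟩
  rintro _ ⟨r, rfl⟩ x hx
  have : r = 1 := by simpa using hx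
  rw [this, map_one]

theorem leftRegular_le_cayAut : leftRegular R ≤ CayAut R S := by
  rintro _ ⟨r, rfl⟩
  exact isCayleyIso_mul_left r

theorem IsCayleyIso.smul_cayAut_le {f : Perm R} (hf : IsCayleyIso S T f) :
    toConjAct f⁻¹ • CayAut R T ≤ CayAut R S := by
  intro _ hmem
  obtain ⟨g, hg, rfl⟩ := (Subgroup.mem_smul_pointwise_iff_exists _ _ _).mp hmem
  rw [mem_cayAut_iff, toConjAct_smul, inv_inv]
  exact (hf.comp hg).comp hf.symm

theorem smul_leftRegular_eq {a : Perm R} {H : Subgroup (Perm R)} (θ : R → H)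
    (hθ : Function.Surjective θ) (h : ∀ r, toConjAct a • toPermHom R R r = θ r) :
    toConjAct a • leftRegular R = H := by
  ext g
  rw [Subgroup.mem_smul_pointwise_iff_exists]
  constructor
  · rintro ⟨_, ⟨r, rfl⟩, rfl⟩
    exact (h r).symm ▸ (θ r).2
  · intro hg
    obtain ⟨r, hr⟩ := hθ ⟨g, hg⟩
    exact ⟨_, ⟨r, rfl⟩, by rw [h, hr]⟩

theorem MulEquiv.smul_leftRegular (φ : R ≃* R) :
    toConjAct (φ.toEquiv : Perm R) • leftRegular R = leftRegular R :=
  smul_leftRegular_eq (fun r => (toPermHom R R).rangeRestrict (φ r))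
    ((toPermHom R R).rangeRestrict_surjective.comp φ.surjective) fun r => by
      ext x
      simp [toConjAct_smul]

theorem map_mul_of_mem_normalizer_leftRegular {f : Perm R}
    (hf : f ∈ Subgroup.normalizer (leftRegular R)) (hf1 : f 1 = 1) (x y : R) :
    f (x * y) = f x * f y := by
  obtain ⟨s, hs⟩ := (Subgroup.mem_normalizer_iff.mp hf (toPermHom R R x)).mp ⟨x, rfl⟩
  have hf1' : f.symm 1 = 1 := by rw [Equiv.symm_apply_eq, hf1]
  have hsx : s = f x := by simpa [hf1'] using congr($hs 1)
  simpa [hsx] using congr($hs (f y)).symm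

theorem exists_mulEquiv_image_eq_of_mem_normalizer {b : Perm R}
    (hb : b ∈ Subgroup.normalizer (leftRegular R)) (hbST : IsCayleyIso S T b) :
    ∃ φ : R ≃* R, ⇑φ '' S = T := by
  set f := toPermHom R R (b 1)⁻¹ * b
  have hf : f ∈ Subgroup.normalizer (leftRegular R) :=
    mul_mem (Subgroup.le_normalizer ⟨_, rfl⟩) hb
  have hf1 : f 1 = 1 := by simp [f]
  have hfST : IsCayleyIso S T f := hbST.comp (isCayleyIso_mul_left _)
  exact ⟨MulEquiv.mk' f (map_mul_of_mem_normalizer_leftRegular hf hf1), hfST.image_eq hf1⟩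

theorem Subgroup.IsRegular.exists_smul_leftRegular_eq {H : Subgroup (Perm R)}
    (hH : H.IsRegular) (ψ : R ≃* H) :
    ∃ f : Perm R, f 1 = 1 ∧ toConjAct f • leftRegular R = H := by
  set f₀ : R → R := fun r => (ψ r : Perm R) 1
  have hf₀ : ∀ r x, f₀ (r * x) = (ψ r : Perm R) (f₀ x) := by simp [f₀]
  have hf₀1 : f₀ 1 = 1 := by simp [f₀]
  have hinj : Function.Injective f₀ := by
    intro r r' h
    have h1 : (ψ (r'⁻¹ * r) : Perm R) 1 = 1 := by
      change f₀ (r'⁻¹ * r) = 1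
      rw [hf₀, h, ← hf₀, inv_mul_cancel, hf₀1]
    have := hH.2 _ (ψ _).2 1 h1
    rw [OneMemClass.coe_eq_one, MulEquiv.map_eq_one_iff, inv_mul_eq_one] at this
    exact this.symm
  have hsurj : Function.Surjective f₀ := fun y => by
    obtain ⟨h, hh, rfl⟩ := hH.1 1 y
    exact ⟨ψ.symm ⟨h, hh⟩, by simp [f₀]⟩
  set f := Equiv.ofBijective f₀ ⟨hinj, hsurj⟩
  refine ⟨f, hf₀1, smul_leftRegular_eq ψ ψ.surjective fun r => ?_⟩
  ext x
  obtain ⟨y, rfl⟩ := f.surjective x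
  rw [toConjAct_smul, Perm.mul_apply, Perm.mul_apply, ← Perm.mul_apply f⁻¹, inv_mul_cancel,
    Perm.one_apply]
  exact hf₀ r y

theorem isCayleyIso_preimage_of_smul_leftRegular_le {f : Perm R}
    (hf : toConjAct f • leftRegular R ≤ CayAut R S) (hf1 : f 1 = 1) :
    IsCayleyIso (f ⁻¹' S) S f := by
  intro p q
  have hg := hf (Subgroup.smul_mem_pointwise_smul _ (toConjAct f) _ ⟨p, rfl⟩) 1 (f (p⁻¹ * q))
  have hf1' : f.symm 1 = 1 := by rw [Equiv.symm_apply_eq, hf1]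
  simpa [toConjAct_smul, hf1'] using hg

theorem exists_mem_cayAut_smul_leftRegular_eq (hDCI : IsDCI S) {H : Subgroup (Perm R)}
    (hHS : H ≤ CayAut R S) (hH : H.IsRegular) (ψ : R ≃* H) :
    ∃ a ∈ CayAut R S, toConjAct a • leftRegular R = H := by
  obtain ⟨f, hf1, hfH⟩ := hH.exists_smul_leftRegular_eq ψ
  have hfT : IsCayleyIso (f ⁻¹' S) S f :=
    isCayleyIso_preimage_of_smul_leftRegular_le (hfH ▸ hHS) hf1
  obtain ⟨φ, hφ⟩ := hDCI _ ⟨f.symm, hfT.symm⟩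
  refine ⟨f * φ.toEquiv, (φ.isCayleyIso_image).comp (hφ ▸ hfT), ?_⟩
  rw [map_mul, mul_smul, φ.smul_leftRegular, hfH]

end LeftRegular

theorem stmt_1_general (R : Type*) [Group R] (S : Set R) :
    (∀ T : Set R,
        (∃ f : Equiv.Perm R, ∀ x y : R, x⁻¹ * y ∈ S ↔ (f x)⁻¹ * f y ∈ T) →
        ∃ φ : R ≃* R, ⇑φ '' S = T) ↔
      (∀ H₁ H₂ : Subgroup (Equiv.Perm R),
        H₁ ≤ CayAut R S → H₂ ≤ CayAut R S →
        ((∀ x y : R, ∃ h ∈ H₁, h x = y) ∧ (∀ h ∈ H₁, ∀ x : R, h x = x → h = 1)) →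
        ((∀ x y : R, ∃ h ∈ H₂, h x = y) ∧ (∀ h ∈ H₂, ∀ x : R, h x = x → h = 1)) →
        Nonempty (H₁ ≃* R) → Nonempty (H₂ ≃* R) →
        ∃ a ∈ CayAut R S, ∀ g : Equiv.Perm R, g ∈ H₁ ↔ a * g * a⁻¹ ∈ H₂) := by
  constructor
  · intro hDCI H₁ H₂ hH₁ hH₂ hreg₁ hreg₂ ⟨e₁⟩ ⟨e₂⟩
    obtain ⟨a₁, ha₁, rfl⟩ :=
      exists_mem_cayAut_smul_leftRegular_eq hDCI hH₁ hreg₁ e₁.symm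
    obtain ⟨a₂, ha₂, rfl⟩ :=
      exists_mem_cayAut_smul_leftRegular_eq hDCI hH₂ hreg₂ e₂.symm
    refine ⟨a₂ * a₁⁻¹, mul_mem ha₂ (inv_mem ha₁), fun g => ?_⟩
    rw [← toConjAct_smul, ← Subgroup.smul_mem_pointwise_smul_iff (a := toConjAct (a₂ * a₁⁻¹)),
      smul_smul, ← map_mul, inv_mul_cancel_right]
  · rintro hconj T ⟨f, hf⟩
    have hle : toConjAct f⁻¹ • leftRegular R ≤ CayAut R S :=
      (Subgroup.pointwise_smul_le_pointwise_smul_iff.mpr leftRegular_le_cayAut).trans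
        (IsCayleyIso.smul_cayAut_le hf)
    obtain ⟨a, ha, hL⟩ := hconj _ _ leftRegular_le_cayAut hle leftRegular_isRegular
      (leftRegular_isRegular.smul f⁻¹) ⟨(Perm.subgroupOfMulAction R R).symm⟩
      ⟨(Subgroup.equivSMul _ _).symm.trans (Perm.subgroupOfMulAction R R).symm⟩
    refine exists_mulEquiv_image_eq_of_mem_normalizer (b := f * a)
      (Subgroup.mem_normalizer_iff.mpr fun g => ?_) ((mem_cayAut_iff.mp ha).comp hf)
    rw [hL, Subgroup.mem_pointwise_smul_iff_inv_smul_mem, ← map_inv, inv_inv, toConjAct_smul,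
      mul_inv_rev]
    simp only [mul_assoc]

/-- **Babai's criterion (Lemma 2.1).** `Cay(R,S)` is a DCI-graph if and only if any two
regular subgroups of `Aut(Cay(R,S))` isomorphic to `R` are conjugate in `Aut(Cay(R,S))`. -/
theorem stmt_1 (R : Type*) [Group R] [Fintype R] (S : Set R) :
    (∀ T : Set R,
        (∃ f : Equiv.Perm R, ∀ x y : R, x⁻¹ * y ∈ S ↔ (f x)⁻¹ * f y ∈ T) →
        ∃ φ : R ≃* R, ⇑φ '' S = T) ↔
      (∀ H₁ H₂ : Subgroup (Equiv.Perm R),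
        H₁ ≤ CayAut R S → H₂ ≤ CayAut R S →
        ((∀ x y : R, ∃ h ∈ H₁, h x = y) ∧ (∀ h ∈ H₁, ∀ x : R, h x = x → h = 1)) →
        ((∀ x y : R, ∃ h ∈ H₂, h x = y) ∧ (∀ h ∈ H₂, ∀ x : R, h x = x → h = 1)) →
        Nonempty (H₁ ≃* R) → Nonempty (H₂ ≃* R) →
        ∃ a ∈ CayAut R S, ∀ g : Equiv.Perm R, g ∈ H₁ ↔ a * g * a⁻¹ ∈ H₂) :=
  stmt_1_general R S
end

section
/- Let R be a finite group and let R_L ≤ Sym(R) be the left regular representation of R, i.e. the group of left translations {x ↦ rx : r ∈ R}. If for every π ∈ Sym(R) the subgroups R_L and π⁻¹R_Lπ are conjugate in the 2-closure ⟨R_L, π⁻¹R_Lπ⟩^{(2)}, then R is a DCI-group. -/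
/-- The left regular representation of a group `R` inside `Sym(R)`: all left translations. -/
def leftReg (R : Type*) [Group R] : Subgroup (Equiv.Perm R) where
  carrier := {σ : Equiv.Perm R | ∃ r : R, ∀ x, σ x = r * x}
  one_mem' := ⟨1, fun x => by simp⟩
  mul_mem' := by
    rintro a b ⟨r, hr⟩ ⟨s, hs⟩
    refine ⟨r * s, fun x => ?_⟩
    simp [Equiv.Perm.mul_apply, hr, hs, mul_assoc]
  inv_mem' := by
    rintro a ⟨r, hr⟩
    refine ⟨r⁻¹, fun x => ?_⟩
    have h := hr (a⁻¹ x)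
    rw [show a (a⁻¹ x) = x from a.apply_symm_apply x] at h
    have h2 : r⁻¹ * x = a⁻¹ x := by
      conv_lhs => rw [h]
      rw [inv_mul_cancel_left]
    exact h2.symm

/-- The conjugate subgroup `π⁻¹ R_L π` of the left regular representation. -/
def leftRegConj (R : Type*) [Group R] (π : Equiv.Perm R) : Subgroup (Equiv.Perm R) where
  carrier := {σ : Equiv.Perm R | ∃ ρ ∈ leftReg R, σ = π⁻¹ * ρ * π}
  one_mem' := ⟨1, one_mem _, by group⟩
  mul_mem' := by
    rintro a b ⟨r, hr, rfl⟩ ⟨s, hs, rfl⟩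
    exact ⟨r * s, mul_mem hr hs, by group⟩
  inv_mem' := by
    rintro a ⟨r, hr, rfl⟩
    exact ⟨r⁻¹, inv_mem hr, by group⟩

/-- `σ` belongs to the 2-closure `G^{(2)}` of `G`. -/
def twoClosed {α : Type*} (G : Subgroup (Equiv.Perm α)) (σ : Equiv.Perm α) : Prop :=
  ∀ x y : α, ∃ g ∈ G, σ x = g x ∧ σ y = g y

/-!
Let `f` be an isomorphism `Cay(R,S) → Cay(R,T)`. Both `R_L` and `f⁻¹ R_L f` act by automorphisms
of `Cay(R,S)`, and the automorphism group of a digraph is 2-closed, so the permutation `ψ`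
conjugating `R_L` onto `f⁻¹ R_L f` inside the 2-closure is an automorphism of `Cay(R,S)`. Then
`f ψ` is an isomorphism `Cay(R,S) → Cay(R,T)` normalising `R_L`; corrected by a left translation
so as to fix `1`, it becomes a group automorphism `φ`, and as an isomorphism fixing `1` it maps
the out-neighbourhood `S` of `1` onto that of `1`, namely `T`.
-/

section RelAut

variable {α : Type*}

def relAut (r : α → α → Prop) : Subgroup (Equiv.Perm α) where
  carrier := {σ | ∀ x y, r x y ↔ r (σ x) (σ y)}
  one_mem' _ _ := Iff.rfl
  mul_mem' {a b} ha hb x y := (hb x y).trans (ha (b x) (b y))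
  inv_mem' {a} ha x y := by simpa using (ha (a⁻¹ x) (a⁻¹ y)).symm

theorem twoClosed.mem_relAut {G : Subgroup (Equiv.Perm α)} {σ : Equiv.Perm α}
    {r : α → α → Prop} (hσ : twoClosed G σ) (hG : G ≤ relAut r) : σ ∈ relAut r := by
  intro x y
  obtain ⟨g, hg, hx, hy⟩ := hσ x y
  rw [hx, hy]
  exact hG hg x y

end RelAut

section Cayley

variable {R : Type*} [Group R]

def cayleyRel (S : Set R) (x y : R) : Prop := x⁻¹ * y ∈ S

theorem leftReg_le_relAut_cayleyRel (S : Set R) : leftReg R ≤ relAut (cayleyRel S) := by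
  rintro σ ⟨r, hr⟩ x y
  simp [cayleyRel, hr, mul_assoc]

theorem leftRegConj_le_relAut {r s : R → R → Prop} {f : Equiv.Perm R}
    (hf : ∀ x y, r x y ↔ s (f x) (f y)) (hs : leftReg R ≤ relAut s) :
    leftRegConj R f ≤ relAut r := by
  rintro _ ⟨ρ, hρ, rfl⟩ x y
  have hfρ : ∀ z, f ((f⁻¹ * ρ * f) z) = ρ (f z) := by simp [Equiv.Perm.mul_apply]
  rw [hf, hf, hfρ, hfρ]
  exact hs hρ _ _

theorem exists_apply_mul_of_conj_mem_leftRegConj {f ψ : Equiv.Perm R} (r : R)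
    (h : ψ * Equiv.mulLeft r * ψ⁻¹ ∈ leftRegConj R f) :
    ∃ s, ∀ z, (f * ψ) (r * z) = s * (f * ψ) z := by
  obtain ⟨ρ, ⟨s, hs⟩, heq⟩ := h
  refine ⟨s, fun z => ?_⟩
  simpa [Equiv.Perm.mul_apply, hs] using congrArg (fun σ : Equiv.Perm R => f (σ (ψ z))) heq

def mulEquivOfApplyMul (g : Equiv.Perm R) (hg : ∀ r, ∃ s, ∀ z, g (r * z) = s * g z) :
    R ≃* R :=
  { g.trans (Equiv.mulLeft (g 1)⁻¹) with
    map_mul' x y := by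
      obtain ⟨s, hs⟩ := hg x
      have hs₁ : g x = s * g 1 := by simpa using hs 1
      simp only [Equiv.toFun_as_coe, Equiv.trans_apply, Equiv.coe_mulLeft, hs, hs₁]
      group }

theorem mulEquivOfApplyMul_apply (g : Equiv.Perm R) (hg : ∀ r, ∃ s, ∀ z, g (r * z) = s * g z)
    (x : R) : mulEquivOfApplyMul g hg x = (g 1)⁻¹ * g x :=
  rfl

end Cayley

theorem stmt_2_general (R : Type*) [Group R]
    (h : ∀ π : Equiv.Perm R, ∃ ψ : Equiv.Perm R,
      twoClosed (leftReg R ⊔ leftRegConj R π) ψ ∧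
      (∀ g : Equiv.Perm R, g ∈ leftReg R ↔ ψ * g * ψ⁻¹ ∈ leftRegConj R π)) :
    ∀ S T : Set R,
      (∃ f : Equiv.Perm R, ∀ x y : R, x⁻¹ * y ∈ S ↔ (f x)⁻¹ * f y ∈ T) →
      ∃ φ : R ≃* R, ⇑φ '' S = T := by
  rintro S T ⟨f, hf⟩
  obtain ⟨ψ, hψ_closed, hψ_conj⟩ := h f
  have hψ : ψ ∈ relAut (cayleyRel S) :=
    hψ_closed.mem_relAut <| sup_le (leftReg_le_relAut_cayleyRel S)
      (leftRegConj_le_relAut (s := cayleyRel T) hf (leftReg_le_relAut_cayleyRel T))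
  have hfψ : ∀ r, ∃ s, ∀ z, (f * ψ) (r * z) = s * (f * ψ) z := fun r =>
    exists_apply_mul_of_conj_mem_leftRegConj r ((hψ_conj _).1 ⟨r, fun _ => rfl⟩)
  set φ := mulEquivOfApplyMul (f * ψ) hfψ
  have hS : S = φ ⁻¹' T := by
    ext x
    rw [Set.mem_preimage, mulEquivOfApplyMul_apply]
    simpa [cayleyRel] using (hψ 1 x).trans (hf _ _)
  exact ⟨φ, by rw [hS, Set.image_preimage_eq _ φ.surjective]⟩

/-- **Lemma 2.2.** If for every `π ∈ Sym(R)` the subgroups `R_L` and `π⁻¹ R_L π` are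
conjugate in the 2-closure `⟨R_L, π⁻¹ R_L π⟩^{(2)}`, then `R` is a DCI-group. -/
theorem stmt_2 (R : Type*) [Group R] [Fintype R]
    (h : ∀ π : Equiv.Perm R, ∃ ψ : Equiv.Perm R,
      twoClosed (leftReg R ⊔ leftRegConj R π) ψ ∧
      (∀ g : Equiv.Perm R, g ∈ leftReg R ↔ ψ * g * ψ⁻¹ ∈ leftRegConj R π)) :
    ∀ S T : Set R,
      (∃ f : Equiv.Perm R, ∀ x y : R, x⁻¹ * y ∈ S ↔ (f x)⁻¹ * f y ∈ T) →
      ∃ φ : R ≃* R, ⇑φ '' S = T :=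
  stmt_2_general R h
end
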